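/- For k ≥ 1 set a_k := 1/(k+1) (with a₀ = 1) and, given radii b_k, let C_k := {x ∈ ℝ² : a_k ≤ ‖x‖ ≤ b_k}. There exists δ > 0 such that for every choice of b_k ∈ (a_k, a_{k−1}) satisfying 0 < a_{k−1} − b_k ≤ δ/(k+1)⁴ for all k ≥ 1, the set 𝒳 := ∪_{k≥1} C_k satisfies Condition (X2), i.e. there is c > 0 with |B(x,r) ∩ 𝒳| ≥ c|B(x,r)| for all x ∈ 𝒳 and 0 ≤ r ≤ diam(𝒳); yet, with Q the uniform probability distribution on 𝒳, sup_{L>0} L^{1/2} ∫_𝒳 exp(−L·δ(x)²) dQ(x) = ∞, i.e. Condition (A) fails. -/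

import Mathlib

open MeasureTheory ProbabilityTheory Filter Set
open scoped ENNReal NNReal Classical

noncomputable section

abbrev Euc (d : ℕ) : Type := EuclideanSpace ℝ (Fin d)

/-- Condition (X2) with constant `c`. -/
def CondX2 {d : ℕ} (𝒳 : Set (Euc d)) (c : ℝ) : Prop :=
  ∀ x ∈ 𝒳, ∀ r : ℝ, 0 ≤ r → r ≤ Metric.diam 𝒳 →
    ENNReal.ofReal c * volume (Metric.closedBall x r) ≤ volume (Metric.closedBall x r ∩ 𝒳)

/-- Condition (A): `sup_{L>0} L^{1/d} ∫ exp(−L δ(x)^d) dQ(x) < ∞`,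
where `δ(x)` is the distance from `x` to `𝒳ᶜ`. -/
def CondA {d : ℕ} (𝒳 : Set (Euc d)) (Q : Measure (Euc d)) : Prop :=
  ∃ M : ℝ, ∀ L : ℝ, 0 < L →
    L ^ ((1 : ℝ) / d) * ∫ x, Real.exp (-L * Metric.infDist x 𝒳ᶜ ^ d) ∂Q ≤ M

open scoped Real

lemma radial_pt (x : Euc 2) (hx : x ≠ 0) (c : ℝ) (hc : 0 ≤ c) :
    ‖(c / ‖x‖) • x‖ = c ∧ dist x ((c / ‖x‖) • x) = |‖x‖ - c| := by
  have hs : (0:ℝ) < ‖x‖ := norm_pos_iff.2 hx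
  constructor
  · rw [norm_smul, Real.norm_eq_abs, abs_div, abs_of_nonneg hc, abs_of_pos hs,
      div_mul_cancel₀ _ hs.ne']
  · rw [dist_eq_norm]
    have h1 : x - (c / ‖x‖) • x = (1 - c / ‖x‖) • x := by
      rw [sub_smul, one_smul]
    rw [h1, norm_smul, Real.norm_eq_abs]
    rw [show (1 - c / ‖x‖) = (‖x‖ - c)/‖x‖ by field_simp]
    rw [abs_div, abs_of_pos hs, div_mul_cancel₀ _ hs.ne']

lemma vol_cb (x : Euc 2) (r : ℝ) (hr : 0 ≤ r) :
    volume (Metric.closedBall x r) = ENNReal.ofReal (π * r ^ 2) := by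
  rw [EuclideanSpace.volume_closedBall]
  simp only [Fintype.card_fin]
  rw [← ENNReal.ofReal_pow hr, ← ENNReal.ofReal_mul (by positivity)]
  congr 1
  have : ((2:ℕ):ℝ) / 2 + 1 = 2 := by norm_num
  rw [this, Real.Gamma_two, Real.sq_sqrt Real.pi_pos.le]
  ring

lemma vol_ball (x : Euc 2) (r : ℝ) (hr : 0 ≤ r) :
    volume (Metric.ball x r) = ENNReal.ofReal (π * r ^ 2) := by
  rw [← MeasureTheory.Measure.addHaar_closedBall_eq_addHaar_ball]
  exact vol_cb x r hr

lemma ann_eq (u v : ℝ) :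
    {x : Euc 2 | u ≤ ‖x‖ ∧ ‖x‖ ≤ v} = Metric.closedBall 0 v \ Metric.ball 0 u := by
  ext x
  simp [Metric.mem_closedBall, Metric.mem_ball, dist_zero_right, and_comm, not_lt]

lemma vol_ann (u v : ℝ) (hu : 0 ≤ u) (huv : u ≤ v) :
    volume {x : Euc 2 | u ≤ ‖x‖ ∧ ‖x‖ ≤ v} = ENNReal.ofReal (π * v ^ 2 - π * u ^ 2) := by
  rw [ann_eq, measure_diff (Metric.ball_subset_closedBall.trans
      (Metric.closedBall_subset_closedBall huv)) measurableSet_ball.nullMeasurableSet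
      (by rw [vol_ball _ _ hu]; exact ENNReal.ofReal_ne_top)]
  rw [vol_cb _ _ (hu.trans huv), vol_ball _ _ hu, ← ENNReal.ofReal_sub _ (by positivity)]

lemma tele_sum (m : ℕ) (t : Finset ℕ) (ht : ∀ i ∈ t, m ≤ i) :
    ∑ i ∈ t, (1/((i:ℝ)+1) - 1/((i:ℝ)+2)) ≤ 1/((m:ℝ)+1) := by
  have hsub : t ⊆ Finset.Ico m (t.sup id + 1) := by
    intro i hi
    rw [Finset.mem_Ico]
    exact ⟨ht i hi, Nat.lt_succ_of_le (Finset.le_sup (f := id) hi)⟩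
  have h1 : ∑ i ∈ t, (1/((i:ℝ)+1) - 1/((i:ℝ)+2)) ≤
      ∑ i ∈ Finset.Ico m (t.sup id + 1), (1/((i:ℝ)+1) - 1/((i:ℝ)+2)) := by
    apply Finset.sum_le_sum_of_subset_of_nonneg hsub
    intro i _ _
    have : 1/((i:ℝ)+2) ≤ 1/((i:ℝ)+1) := by
      apply one_div_le_one_div_of_le <;> [positivity; linarith]
    linarith
  refine h1.trans ?_
  rw [Finset.sum_Ico_eq_sum_range]
  have h2 : ∀ j : ℕ, (1/(((m+j:ℕ):ℝ)+1) - 1/(((m+j:ℕ):ℝ)+2)) =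
      (fun j : ℕ => 1/(((m+j:ℕ):ℝ)+1)) j - (fun j : ℕ => 1/(((m+j:ℕ):ℝ)+1)) (j+1) := by
    intro j; push_cast; ring_nf
  calc ∑ j ∈ Finset.range (t.sup id + 1 - m), (1/(((m+j:ℕ):ℝ)+1) - 1/(((m+j:ℕ):ℝ)+2))
      = ∑ j ∈ Finset.range (t.sup id + 1 - m),
        ((fun j : ℕ => 1/(((m+j:ℕ):ℝ)+1)) j - (fun j : ℕ => 1/(((m+j:ℕ):ℝ)+1)) (j+1)) := by
        apply Finset.sum_congr rfl; intro j _; exact h2 j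
    _ = 1/(((m+0:ℕ):ℝ)+1) - 1/(((m + (t.sup id + 1 - m):ℕ):ℝ)+1) := Finset.sum_range_sub' _ _
    _ ≤ 1/((m:ℝ)+1) := by
        simp only [Nat.add_zero]
        have : (0:ℝ) < 1/(((m + (t.sup id + 1 - m):ℕ):ℝ)+1) := by positivity
        linarith

def RingSet (b : ℕ → ℝ) : Set (Euc 2) :=
  ⋃ k ∈ {k : ℕ | 1 ≤ k}, {x : Euc 2 | 1 / ((k : ℝ) + 1) ≤ ‖x‖ ∧ ‖x‖ ≤ b k}

lemma mem_RingSet {b : ℕ → ℝ} {x : Euc 2} :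
    x ∈ RingSet b ↔ ∃ k : ℕ, 1 ≤ k ∧ 1 / ((k : ℝ) + 1) ≤ ‖x‖ ∧ ‖x‖ ≤ b k := by
  simp [RingSet]; tauto

section facts
variable {b : ℕ → ℝ}
  (hb1 : ∀ k : ℕ, 1 ≤ k → (1 : ℝ) / (k + 1) < b k ∧ b k < 1 / k)

include hb1

lemma b1_lb : (1:ℝ)/2 < b 1 := by have := (hb1 1 le_rfl).1; norm_num at this ⊢; linarith

lemma b1_ub : b 1 < 1 := by have := (hb1 1 le_rfl).2; norm_num at this ⊢; linarith

lemma bk_le_b1 {k : ℕ} (hk : 1 ≤ k) : b k ≤ b 1 := by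
  rcases eq_or_lt_of_le hk with h | h
  · rw [← h]
  · have h2 : (2:ℕ) ≤ k := h
    have := (hb1 k hk).2
    have hk2 : (1:ℝ)/k ≤ 1/2 := by
      apply one_div_le_one_div_of_le (by norm_num)
      exact_mod_cast h2
    linarith [b1_lb hb1]

lemma bk_pos {k : ℕ} (hk : 1 ≤ k) : 0 < b k := by
  have := (hb1 k hk).1
  have : (0:ℝ) < 1/((k:ℝ)+1) := by positivity
  linarith [(hb1 k hk).1]

lemma X_subset_ball : RingSet b ⊆ Metric.closedBall 0 (b 1) := by
  intro x hx
  rw [mem_RingSet] at hx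
  obtain ⟨k, hk, _, h2⟩ := hx
  rw [Metric.mem_closedBall, dist_zero_right]
  exact h2.trans (bk_le_b1 hb1 hk)

lemma diam_X_le : Metric.diam (RingSet b) ≤ 2 * b 1 := by
  exact (Metric.diam_mono (X_subset_ball hb1) Metric.isBounded_closedBall).trans
    (Metric.diam_closedBall (by linarith [b1_lb hb1]))

/-- points with norm in a gap are not in the set -/
lemma gap_not_mem {k : ℕ} (hk : 1 ≤ k) {c : ℝ} (h1 : b (k+1) < c)
    (h2 : c < 1 / ((k:ℝ) + 1)) {y : Euc 2} (hy : ‖y‖ = c) : y ∉ RingSet b := by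
  rw [mem_RingSet]
  rintro ⟨j, hj, hy1, hy2⟩
  rw [hy] at hy1 hy2
  rcases le_or_gt j k with hjk | hjk
  · -- 1/(j+1) ≥ 1/(k+1) > c
    have : (1:ℝ)/((k:ℝ)+1) ≤ 1/((j:ℝ)+1) := by
      apply one_div_le_one_div_of_le (by positivity)
      have : (j:ℝ) ≤ k := by exact_mod_cast hjk
      linarith
    linarith
  · -- j ≥ k+1 : b j ≤ c is contradicted
    rcases eq_or_lt_of_le (Nat.succ_le_of_lt hjk) with h | h
    · rw [← h] at hy2; linarith
    · -- j ≥ k+2: b j < 1/j ≤ 1/(k+2) < b (k+1) < c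
      have hj2 : (k:ℝ) + 2 ≤ (j:ℝ) := by exact_mod_cast h
      have hbj : b j < 1/(j:ℝ) := (hb1 j hj).2
      have h14 : (1:ℝ)/(j:ℝ) ≤ 1/((k:ℝ)+2) := by
        apply one_div_le_one_div_of_le (by positivity) hj2
      have hbk1 : (1:ℝ)/((k:ℝ)+2) < b (k+1) := by
        have := (hb1 (k+1) (by omega)).1
        push_cast at this
        rw [show ((k:ℝ)+2) = (k:ℝ)+1+1 by ring]
        exact this
      linarith
end facts
section facts2
variable {b : ℕ → ℝ} {δ : ℝ}
  (hb1 : ∀ k : ℕ, 1 ≤ k → (1 : ℝ) / (k + 1) < b k ∧ b k < 1 / k)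
  (hb2 : ∀ k : ℕ, 1 ≤ k → 0 < 1 / (k : ℝ) - b k ∧ 1 / (k : ℝ) - b k ≤ δ / ((k : ℝ) + 1) ^ 4)

/-- the gap annulus below ring k+1, i.e. norms in (b (i+2), 1/(i+2)) -/
def Gap (b : ℕ → ℝ) (i : ℕ) : Set (Euc 2) :=
  {y : Euc 2 | b (i+2) < ‖y‖ ∧ ‖y‖ < 1/((i:ℝ)+2)}

include hb1 in
set_option linter.unusedSectionVars false in
lemma compl_structure :
    Metric.closedBall 0 (b 1) \ RingSet b ⊆ {0} ∪ ⋃ i : ℕ, Gap b i := by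
  rintro y ⟨hyD, hyX⟩
  by_cases hy0 : y = 0
  · exact Or.inl hy0
  right
  have hs : 0 < ‖y‖ := norm_pos_iff.2 hy0
  have hsb1 : ‖y‖ ≤ b 1 := by rwa [Metric.mem_closedBall, dist_zero_right] at hyD
  have hex : ∃ n : ℕ, 1 ≤ n ∧ 1/((n:ℝ)+1) ≤ ‖y‖ := by
    obtain ⟨n, hn⟩ := exists_nat_one_div_lt hs
    refine ⟨n + 1, le_add_self, ?_⟩
    have hd : 1/((n:ℝ)+1+1) ≤ 1/((n:ℝ)+1) :=
      one_div_le_one_div_of_le (by positivity) (by linarith)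
    push_cast
    linarith
  classical
  let k := Nat.find hex
  have hk : 1 ≤ k ∧ 1/((k:ℝ)+1) ≤ ‖y‖ := Nat.find_spec hex
  have hbk : b k < ‖y‖ := by
    by_contra h
    exact hyX (mem_RingSet.2 ⟨k, hk.1, hk.2, le_of_not_gt h⟩)
  have hk2 : 2 ≤ k := by
    rcases Nat.lt_or_ge k 2 with h | h
    · interval_cases k
      · exact absurd hk.1 (by norm_num)
      · exact absurd hsb1 (not_le.2 hbk)
    · exact h
  have hmin : ¬ (1 ≤ k - 1 ∧ 1/(((k-1:ℕ):ℝ)+1) ≤ ‖y‖) :=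
    Nat.find_min hex (by omega)
  have hlt : ‖y‖ < 1/(((k-1:ℕ):ℝ)+1) := by
    by_contra h
    exact hmin ⟨by omega, le_of_not_gt h⟩
  refine mem_iUnion.2 ⟨k - 2, ?_, ?_⟩
  · show b (k - 2 + 2) < ‖y‖
    rwa [show k - 2 + 2 = k by omega]
  · show ‖y‖ < 1/(((k-2:ℕ):ℝ)+2)
    have : (((k-1:ℕ):ℝ)+1) = (((k-2:ℕ):ℝ)+2) := by
      have h1 : ((k-1:ℕ):ℝ) = (k:ℝ) - 1 := by
        rw [Nat.cast_sub (by omega)]; norm_num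
      have h2 : ((k-2:ℕ):ℝ) = (k:ℝ) - 2 := by
        rw [Nat.cast_sub (by omega)]; norm_num
      rw [h1, h2]; ring
    rwa [this] at hlt

include hb1 hb2 in
lemma vol_gap_le (i : ℕ) (hδ : 0 < δ) :
    volume (Gap b i) ≤ ENNReal.ofReal (2*π*δ/((i:ℝ)+2)^5) := by
  have h2i : 2 ≤ i + 2 := by omega
  have hbl : (1:ℝ)/((i:ℝ)+3) < b (i+2) := by
    have := (hb1 (i+2) (by omega)).1
    push_cast at this
    rw [show ((i:ℝ)+3) = (i:ℝ)+2+1 by ring]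
    exact this
  have hbu : b (i+2) < 1/((i:ℝ)+2) := by
    have := (hb1 (i+2) (by omega)).2
    push_cast at this
    exact this
  have hg : 1/((i:ℝ)+2) - b (i+2) ≤ δ/((i:ℝ)+3)^4 := by
    have := (hb2 (i+2) (by omega)).2
    push_cast at this
    rw [show ((i:ℝ)+3) = (i:ℝ)+2+1 by ring]
    exact this
  have hbpos : 0 < b (i+2) := lt_trans (by positivity) hbl
  have hsub : Gap b i ⊆ {y : Euc 2 | b (i+2) ≤ ‖y‖ ∧ ‖y‖ ≤ 1/((i:ℝ)+2)} := by
    rintro y ⟨h1, h2⟩; exact ⟨h1.le, h2.le⟩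
  refine (measure_mono hsub).trans ?_
  rw [vol_ann _ _ hbpos.le hbu.le]
  apply ENNReal.ofReal_le_ofReal
  set q := (i:ℝ)
  have hq : 0 ≤ q := Nat.cast_nonneg i
  have key : π * (1/(q+2))^2 - π * (b (i+2))^2
      = π * (1/(q+2) + b (i+2)) * (1/(q+2) - b (i+2)) := by ring
  rw [key]
  have h1 : 1/(q+2) + b (i+2) ≤ 2/(q+2) := by
    have h0 : (2:ℝ)/(q+2) = 1/(q+2) + 1/(q+2) := by ring
    have : b (i+2) ≤ 1/(q+2) := hbu.le
    linarith
  have h2 : (0:ℝ) ≤ 1/(q+2) - b (i+2) := by linarith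
  calc π * (1/(q+2) + b (i+2)) * (1/(q+2) - b (i+2))
      ≤ π * (2/(q+2)) * (δ/(q+3)^4) := by
        apply mul_le_mul
        · apply mul_le_mul_of_nonneg_left h1 Real.pi_pos.le
        · linarith
        · exact h2
        · positivity
    _ = 2*π*δ/((q+2)*(q+3)^4) := by
        have hq2 : (q+2) ≠ 0 := by positivity
        have hq3 : (q+3) ≠ 0 := by positivity
        rw [eq_div_iff (by positivity : ((q+2)*(q+3)^4) ≠ 0)]
        field_simp
    _ ≤ 2*π*δ/(q+2)^5 := by
        apply div_le_div_of_nonneg_left (by positivity) (by positivity)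
        nlinarith [pow_le_pow_left₀ (by linarith : (0:ℝ) ≤ q+2) (by linarith : q+2 ≤ q+3) 4]
end facts2
section facts3
variable {b : ℕ → ℝ} {δ : ℝ}
  (hb1 : ∀ k : ℕ, 1 ≤ k → (1 : ℝ) / (k + 1) < b k ∧ b k < 1 / k)
  (hb2 : ∀ k : ℕ, 1 ≤ k → 0 < 1 / (k : ℝ) - b k ∧ 1 / (k : ℝ) - b k ≤ δ / ((k : ℝ) + 1) ^ 4)

include hb1 in
lemma bl_gap (i : ℕ) : 1/((i:ℝ)+3) < b (i+2) := by
  have := (hb1 (i+2) (by omega)).1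
  push_cast at this
  rw [show ((i:ℝ)+3) = (i:ℝ)+2+1 by ring]
  exact this

include hb1 hb2 in
lemma gap_sum_bound (hδ : 0 < δ) (x : Euc 2) (r : ℝ) (hr : 0 < r) :
    volume (Metric.closedBall x r ∩ (Metric.closedBall 0 (b 1) \ RingSet b))
      ≤ ENNReal.ofReal (162*π*δ*(‖x‖+r)^4) := by
  set R := ‖x‖ + r with hR
  have hRpos : 0 < R := by have := norm_nonneg x; simp only [hR]; linarith
  have hsub : Metric.closedBall x r ∩ (Metric.closedBall 0 (b 1) \ RingSet b)
      ⊆ {(0:Euc 2)} ∪ ⋃ i : ℕ, (Metric.closedBall x r ∩ Gap b i) := by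
    rintro y ⟨hy1, hy2⟩
    rcases compl_structure hb1 hy2 with h | h
    · exact Or.inl h
    · obtain ⟨Gi, ⟨i, rfl⟩, hGi⟩ := h
      exact Or.inr (mem_iUnion.2 ⟨i, hy1, hGi⟩)
  refine (measure_mono hsub).trans ?_
  refine (measure_union_le _ _).trans ?_
  rw [measure_singleton, zero_add]
  refine (measure_iUnion_le _).trans ?_
  rw [ENNReal.tsum_eq_iSup_sum]
  refine iSup_le fun t => ?_
  classical
  set t1 := t.filter (fun i => b (i+2) < R) with ht1
  have hzero : ∀ i ∈ t.filter (fun i => ¬ b (i+2) < R),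
      volume (Metric.closedBall x r ∩ Gap b i) = 0 := by
    intro i hi
    have hcond : R ≤ b (i+2) := le_of_not_gt (Finset.mem_filter.1 hi).2
    convert measure_empty (μ := volume (α := Euc 2))
    rw [eq_empty_iff_forall_notMem]
    rintro y ⟨hy1, hy2, _⟩
    have hdy : dist y x ≤ r := Metric.mem_closedBall.1 hy1
    have : ‖y‖ - ‖x‖ ≤ dist y x := by
      rw [dist_eq_norm]; exact norm_sub_norm_le y x
    linarith
  have hsplit : ∑ i ∈ t, volume (Metric.closedBall x r ∩ Gap b i)
      = ∑ i ∈ t1, volume (Metric.closedBall x r ∩ Gap b i) := by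
    rw [← Finset.sum_filter_add_sum_filter_not t (fun i => b (i+2) < R)]
    rw [Finset.sum_eq_zero hzero, add_zero]
  rw [hsplit]
  rcases Finset.eq_empty_or_nonempty t1 with he | hne
  · rw [he, Finset.sum_empty]; exact zero_le
  set m := t1.min' hne with hm
  have hmem : m ∈ t1 := t1.min'_mem hne
  have h3R : ∀ i ∈ t1, 1/((i:ℝ)+1) < 3*R := by
    intro i hi
    have hcond : b (i+2) < R := (Finset.mem_filter.1 hi).2
    have h1 : 1/((i:ℝ)+3) < R := (bl_gap hb1 i).trans hcond
    have h2 : 1/((i:ℝ)+1) ≤ 3/((i:ℝ)+3) := by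
      rw [div_le_div_iff₀ (by positivity) (by positivity)]
      have : (0:ℝ) ≤ (i:ℝ) := Nat.cast_nonneg i
      linarith
    have h3 : (3:ℝ)/((i:ℝ)+3) = 3*(1/((i:ℝ)+3)) := by ring
    linarith
  have hterm : ∀ i ∈ t1, volume (Metric.closedBall x r ∩ Gap b i)
      ≤ ENNReal.ofReal (54*π*δ*R^3*(1/((i:ℝ)+1) - 1/((i:ℝ)+2))) := by
    intro i hi
    refine (measure_mono (inter_subset_right)).trans ?_
    refine (vol_gap_le hb1 hb2 i hδ).trans (ENNReal.ofReal_le_ofReal ?_)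
    set q := (i:ℝ) with hq
    have hq0 : 0 ≤ q := Nat.cast_nonneg i
    have hdiff : 1/(q+1) - 1/(q+2) = 1/((q+1)*(q+2)) := by
      field_simp
      norm_num
    rw [hdiff]
    have hcube : 1/(q+1)^3 ≤ 27*R^3 := by
      have h1 : 1/(q+1) < 3*R := h3R i hi
      have h2 : (1/(q+1))^3 ≤ (3*R)^3 :=
        pow_le_pow_left₀ (by positivity) h1.le 3
      calc 1/(q+1)^3 = (1/(q+1))^3 := (one_div_pow (q+1) 3).symm
        _ ≤ (3*R)^3 := h2
        _ = 27*R^3 := by ring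
    calc 2*π*δ/(q+2)^5 ≤ 2*π*δ/((q+1)^4*(q+2)) := by
          apply div_le_div_of_nonneg_left (by positivity) (by positivity)
          nlinarith [pow_le_pow_left₀ (by linarith : (0:ℝ) ≤ q+1) (by linarith : q+1 ≤ q+2) 4]
      _ = (1/(q+1)^3)*(2*π*δ*(1/((q+1)*(q+2)))) := by
          field_simp
      _ ≤ (27*R^3)*(2*π*δ*(1/((q+1)*(q+2)))) := by
          apply mul_le_mul_of_nonneg_right hcube (by positivity)
      _ = 54*π*δ*R^3*(1/((q+1)*(q+2))) := by ring
  refine (Finset.sum_le_sum hterm).trans ?_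
  have hnn : ∀ i ∈ t1, 0 ≤ 54*π*δ*R^3*(1/((i:ℝ)+1) - 1/((i:ℝ)+2)) := by
    intro i hi
    have hi1 : (0:ℝ) < (i:ℝ)+1 := by positivity
    have hi2 : ((i:ℝ)+1) ≤ (i:ℝ)+2 := by linarith
    have h0 : 1/((i:ℝ)+2) ≤ 1/((i:ℝ)+1) := one_div_le_one_div_of_le hi1 hi2
    exact mul_nonneg (by positivity) (by linarith)
  rw [← ENNReal.ofReal_sum_of_nonneg hnn]
  · apply ENNReal.ofReal_le_ofReal
    rw [← Finset.mul_sum]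
    have htel : ∑ i ∈ t1, (1/((i:ℝ)+1) - 1/((i:ℝ)+2)) ≤ 1/((m:ℝ)+1) :=
      tele_sum m t1 (fun i hi => t1.min'_le i hi)
    have h1 : (54*π*δ*R^3) * (∑ i ∈ t1, (1/((i:ℝ)+1) - 1/((i:ℝ)+2)))
        ≤ (54*π*δ*R^3) * (1/((m:ℝ)+1)) :=
      mul_le_mul_of_nonneg_left htel (by positivity)
    have h2 : (54*π*δ*R^3) * (1/((m:ℝ)+1)) ≤ (54*π*δ*R^3) * (3*R) :=
      mul_le_mul_of_nonneg_left (h3R m hmem).le (by positivity)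
    calc (54*π*δ*R^3) * (∑ i ∈ t1, (1/((i:ℝ)+1) - 1/((i:ℝ)+2)))
        ≤ (54*π*δ*R^3) * (3*R) := h1.trans h2
      _ = 162*π*δ*R^4 := by ring
end facts3
section x2sec
variable {b : ℕ → ℝ} {δ : ℝ}
  (hb1 : ∀ k : ℕ, 1 ≤ k → (1 : ℝ) / (k + 1) < b k ∧ b k < 1 / k)
  (hb2 : ∀ k : ℕ, 1 ≤ k → 0 < 1 / (k : ℝ) - b k ∧ 1 / (k : ℝ) - b k ≤ δ / ((k : ℝ) + 1) ^ 4)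

lemma inner_ball_X {x : Euc 2} {k : ℕ} {r : ℝ} (hk : 1 ≤ k)
    (hx1 : 1/((k:ℝ)+1) ≤ ‖x‖) (hx2 : ‖x‖ ≤ b k) (hr : 0 < r)
    (hrw : r ≤ b k - 1/((k:ℝ)+1)) :
    ENNReal.ofReal (π*(r/4)^2) ≤ volume (Metric.closedBall x r ∩ RingSet b) := by
  set a := 1/((k:ℝ)+1) with ha
  have hapos : 0 < a := by positivity
  set s := ‖x‖ with hs
  have hx0 : x ≠ 0 := by
    intro h
    have : s = 0 := by rw [hs, h, norm_zero]
    linarith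
  set c := min (max s (a + r/4)) (b k - r/4) with hc
  have hord : a + r/4 ≤ b k - r/4 := by linarith
  have hc1 : a + r/4 ≤ c :=
    le_min (le_trans (by linarith) (le_max_right _ _)) hord
  have hc2 : c ≤ b k - r/4 := min_le_right _ _
  have hc3 : c ≤ s + r/4 := by
    refine (min_le_left _ _).trans (max_le (by linarith) (by linarith))
  have hc4 : s - r/4 ≤ c := le_min ((le_max_left _ _).trans' (by linarith)) (by linarith)
  have hcpos : 0 < c := by linarith
  obtain ⟨hyn, hyd⟩ := radial_pt x hx0 c hcpos.le
  set y := (c / ‖x‖) • x with hy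
  have hdxy : dist x y ≤ r/4 := by
    rw [hyd, abs_le]
    constructor <;> [linarith; linarith]
  have hsub : Metric.closedBall y (r/4) ⊆ Metric.closedBall x r ∩ RingSet b := by
    intro z hz
    rw [Metric.mem_closedBall] at hz
    have hzn : |‖z‖ - c| ≤ r/4 := by
      rw [← hyn]
      calc |‖z‖ - ‖y‖| ≤ ‖z - y‖ := abs_norm_sub_norm_le z y
        _ = dist z y := (dist_eq_norm z y).symm
        _ ≤ r/4 := hz
    rw [abs_le] at hzn
    constructor
    · rw [Metric.mem_closedBall]
      calc dist z x ≤ dist z y + dist y x := dist_triangle z y x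
        _ ≤ r/4 + r/4 := add_le_add hz (by rwa [dist_comm])
        _ ≤ r := by linarith
    · rw [mem_RingSet]
      exact ⟨k, hk, by rw [← ha]; linarith, by linarith⟩
  calc ENNReal.ofReal (π*(r/4)^2) = volume (Metric.closedBall y (r/4)) :=
        (vol_cb y (r/4) (by linarith)).symm
    _ ≤ volume (Metric.closedBall x r ∩ RingSet b) := measure_mono hsub

lemma inner_ball_D {x : Euc 2} {r : ℝ} {Rb : ℝ} (hRb : 0 < Rb)
    (hx : ‖x‖ ≤ Rb) (hx0 : x ≠ 0) (hr : 0 < r) (hr2 : r ≤ 2 * Rb) :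
    ENNReal.ofReal (π*(r/2)^2)
      ≤ volume (Metric.closedBall x r ∩ Metric.closedBall 0 Rb) := by
  set s := ‖x‖ with hs
  have hspos : 0 < s := norm_pos_iff.2 hx0
  set c := max (s - r/2) 0 with hc
  have hcnn : 0 ≤ c := le_max_right _ _
  have hc1 : c ≤ s := max_le (by linarith) (by linarith)
  have hc2 : s - r/2 ≤ c := le_max_left _ _
  have hc3 : c + r/2 ≤ Rb := by
    rcases max_cases (s - r/2) 0 with ⟨h1, _⟩ | ⟨h1, _⟩ <;> rw [hc, h1] <;> linarith
  obtain ⟨hyn, hyd⟩ := radial_pt x hx0 c hcnn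
  set y := (c / ‖x‖) • x with hy
  have hdxy : dist x y ≤ r/2 := by
    rw [hyd, abs_le]
    constructor <;> [linarith; linarith]
  have hsub : Metric.closedBall y (r/2) ⊆ Metric.closedBall x r ∩ Metric.closedBall 0 Rb := by
    intro z hz
    rw [Metric.mem_closedBall] at hz
    constructor
    · rw [Metric.mem_closedBall]
      calc dist z x ≤ dist z y + dist y x := dist_triangle z y x
        _ ≤ r/2 + r/2 := add_le_add hz (by rwa [dist_comm])
        _ = r := by ring
    · rw [Metric.mem_closedBall, dist_zero_right]
      calc ‖z‖ ≤ ‖y‖ + ‖z - y‖ := norm_le_insert' _ _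
        _ = c + dist z y := by rw [hyn, dist_eq_norm]
        _ ≤ c + r/2 := by linarith
        _ ≤ Rb := hc3
  calc ENNReal.ofReal (π*(r/2)^2) = volume (Metric.closedBall y (r/2)) :=
        (vol_cb y (r/2) (by linarith)).symm
    _ ≤ volume (Metric.closedBall x r ∩ Metric.closedBall 0 Rb) := measure_mono hsub

include hb1 hb2 in
set_option maxHeartbeats 1000000 in
lemma condX2_proof (hδ1 : 0 < δ) (hδ2 : δ ≤ 1/100000) : CondX2 (RingSet b) (1/16) := by
  intro x hx r hr0 hrd
  rcases eq_or_lt_of_le hr0 with h0 | hrpos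
  · rw [← h0, vol_cb x 0 le_rfl]
    norm_num
  obtain ⟨k, hk, hx1, hx2⟩ := mem_RingSet.1 hx
  have hLHS : ENNReal.ofReal (1/16) * volume (Metric.closedBall x r)
      = ENNReal.ofReal (π*r^2/16) := by
    rw [vol_cb x r hr0, ← ENNReal.ofReal_mul (by norm_num)]
    ring_nf
  rw [hLHS]
  have hbk := hb1 k hk
  have hak : (0:ℝ) < 1/((k:ℝ)+1) := by positivity
  have hx0 : x ≠ 0 := by
    intro h; rw [h, norm_zero] at hx1; linarith
  rcases le_or_gt r (b k - 1/((k:ℝ)+1)) with hA | hB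
  · -- Case A : small radius, ball inside the ring
    have := inner_ball_X hk hx1 hx2 hrpos hA
    refine le_trans (le_of_eq ?_) this
    rw [show π*(r/4)^2 = π*r^2/16 by ring]
  · -- Case B
    have hkr : (1:ℝ) ≤ (k:ℝ) := by exact_mod_cast hk
    have hb1pos : (0:ℝ) < b 1 := by
      have := b1_lb hb1; linarith
    have hxb1 : ‖x‖ ≤ b 1 := hx2.trans (bk_le_b1 hb1 hk)
    have hr2b1 : r ≤ 2 * b 1 := hrd.trans (diam_X_le hb1)
    -- width lower bound gives s^2 ≤ 20 r / 9 etc.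
    have hwidth : (1-δ)/((k:ℝ)*((k:ℝ)+1)) ≤ b k - 1/((k:ℝ)+1) := by
      have hgap := (hb2 k hk).2
      have h1 : (1:ℝ)/(k:ℝ) - 1/((k:ℝ)+1) = 1/((k:ℝ)*((k:ℝ)+1)) := by
        field_simp
        ring
      have h2 : δ/(((k:ℝ))+1)^4 ≤ δ/((k:ℝ)*((k:ℝ)+1)) := by
        apply div_le_div_of_nonneg_left hδ1.le (by positivity)
        nlinarith [hkr, sq_nonneg ((k:ℝ)), sq_nonneg ((k:ℝ)+1), sq_nonneg ((k:ℝ)*((k:ℝ)+1))]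
      have h3 : (1-δ)/((k:ℝ)*((k:ℝ)+1))
          = 1/((k:ℝ)*((k:ℝ)+1)) - δ/((k:ℝ)*((k:ℝ)+1)) := by ring
      linarith
  -- now bound R^2 ≤ 9 r
    have hs2 : ‖x‖^2 ≤ 20*r/9 := by
      have hδ10 : δ ≤ 1/10 := by linarith
      have h1 : (1-δ)/(2*(k:ℝ)^2) ≤ (1-δ)/((k:ℝ)*((k:ℝ)+1)) := by
        apply div_le_div_of_nonneg_left (by linarith) (by positivity)
        nlinarith
      have h2 : (9:ℝ)/10/(2*(k:ℝ)^2) ≤ (1-δ)/(2*(k:ℝ)^2) := by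
        apply div_le_div_of_nonneg_right (by linarith) (by positivity)
      have hr' : (9:ℝ)/10/(2*(k:ℝ)^2) < r := by linarith
      have hsk : ‖x‖ < 1/(k:ℝ) := lt_of_le_of_lt hx2 (hb1 k hk).2
      have hs0 : 0 ≤ ‖x‖ := norm_nonneg x
      have : ‖x‖^2 < 1/(k:ℝ)^2 := by
        have := mul_self_lt_mul_self hs0 hsk
        calc ‖x‖^2 = ‖x‖*‖x‖ := by ring
          _ < (1/(k:ℝ))*(1/(k:ℝ)) := this
          _ = 1/(k:ℝ)^2 := by ring
      have hk2 : (9:ℝ)/10/(2*(k:ℝ)^2) = (9/20)*(1/(k:ℝ)^2) := by ring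
      linarith
    have hR2 : (‖x‖+r)^2 ≤ 9*r := by
      have hrle2 : r ≤ 2 := by
        have := b1_ub hb1; linarith
      have h2r : r^2 ≤ 2*r := by nlinarith [hrpos.le, hrle2]
      nlinarith [sq_nonneg (‖x‖ - r), hs2, h2r]
    have hR4 : 162*π*δ*(‖x‖+r)^4 ≤ (13122/100000)*(π*r^2) := by
      have h4 : (‖x‖+r)^4 ≤ 81*r^2 := by
        calc (‖x‖+r)^4 = ((‖x‖+r)^2)^2 := by ring
          _ ≤ (9*r)^2 := by
              apply pow_le_pow_left₀ (by positivity) hR2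
          _ = 81*r^2 := by ring
      have hδnn : (0:ℝ) ≤ 162*π*δ := by positivity
      calc 162*π*δ*(‖x‖+r)^4 ≤ 162*π*δ*(81*r^2) :=
            mul_le_mul_of_nonneg_left h4 hδnn
        _ ≤ (13122/100000)*(π*r^2) := by
            have hπr : (0:ℝ) ≤ π*r^2 := by positivity
            have hmm := mul_le_mul_of_nonneg_right hδ2 hπr
            nlinarith [hmm]
    -- assemble
    have hDcover : Metric.closedBall x r ∩ Metric.closedBall 0 (b 1)
        ⊆ (Metric.closedBall x r ∩ RingSet b)
          ∪ (Metric.closedBall x r ∩ (Metric.closedBall 0 (b 1) \ RingSet b)) := by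
      rintro y ⟨h1, h2⟩
      by_cases hy : y ∈ RingSet b
      · exact Or.inl ⟨h1, hy⟩
      · exact Or.inr ⟨h1, h2, hy⟩
    have hmid : volume (Metric.closedBall x r ∩ Metric.closedBall 0 (b 1))
        ≤ volume (Metric.closedBall x r ∩ RingSet b)
          + ENNReal.ofReal (162*π*δ*(‖x‖+r)^4) := by
      refine (measure_mono hDcover).trans ?_
      refine (measure_union_le _ _).trans ?_
      exact add_le_add_right (gap_sum_bound hb1 hb2 hδ1 x r hrpos) _
    have hlow := inner_ball_D hb1pos hxb1 hx0 hrpos hr2b1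
    have hkey : ENNReal.ofReal (π*r^2/16) + ENNReal.ofReal (162*π*δ*(‖x‖+r)^4)
        ≤ volume (Metric.closedBall x r ∩ RingSet b)
          + ENNReal.ofReal (162*π*δ*(‖x‖+r)^4) := by
      calc ENNReal.ofReal (π*r^2/16) + ENNReal.ofReal (162*π*δ*(‖x‖+r)^4)
          = ENNReal.ofReal (π*r^2/16 + 162*π*δ*(‖x‖+r)^4) := by
            rw [ENNReal.ofReal_add (by positivity) (by positivity)]
        _ ≤ ENNReal.ofReal (π*(r/2)^2) := by
            apply ENNReal.ofReal_le_ofReal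
            have : π*(r/2)^2 = π*r^2/4 := by ring
            rw [this]
            nlinarith [Real.pi_pos, sq_nonneg r]
        _ ≤ volume (Metric.closedBall x r ∩ Metric.closedBall 0 (b 1)) := hlow
        _ ≤ _ := hmid
    exact (ENNReal.add_le_add_iff_right ENNReal.ofReal_ne_top).1 hkey
end x2sec
-- harmonic-type sums
lemma block_sum (p : ℕ) : (1:ℝ)/2 ≤ ∑ k ∈ Finset.Ico (2^p : ℕ) (2^(p+1) : ℕ), 1/((k:ℝ)+1) := by
  have hcard : (Finset.Ico (2^p : ℕ) (2^(p+1) : ℕ)).card = 2^p := by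
    rw [Nat.card_Ico]
    have : 2^(p+1) = 2*2^p := by ring
    omega
  have hterm : ∀ k ∈ Finset.Ico (2^p : ℕ) (2^(p+1) : ℕ), (1:ℝ)/2^(p+1) ≤ 1/((k:ℝ)+1) := by
    intro k hk
    rw [Finset.mem_Ico] at hk
    apply one_div_le_one_div_of_le (by positivity)
    have : (k:ℝ) + 1 ≤ ((2^(p+1) : ℕ) : ℝ) := by
      have : k + 1 ≤ 2^(p+1) := by omega
      exact_mod_cast this
    calc (k:ℝ)+1 ≤ ((2^(p+1):ℕ):ℝ) := this
      _ = 2^(p+1) := by push_cast; ring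
  have := Finset.card_nsmul_le_sum (Finset.Ico (2^p : ℕ) (2^(p+1) : ℕ))
    (fun k => 1/((k:ℝ)+1)) ((1:ℝ)/2^(p+1)) hterm
  rw [hcard, nsmul_eq_mul] at this
  have heq : ((2^p:ℕ):ℝ) * ((1:ℝ)/2^(p+1)) = 1/2 := by
    push_cast
    rw [pow_succ]
    field_simp
  linarith [this, heq.symm.le]

lemma harm_sum (m q : ℕ) :
    (q:ℝ)/2 ≤ ∑ k ∈ Finset.Ico (2^m : ℕ) (2^(m+q) : ℕ), 1/((k:ℝ)+1) := by
  induction q with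
  | zero => simp
  | succ q ih =>
    have hmono1 : (2:ℕ)^m ≤ 2^(m+q) := Nat.pow_le_pow_right (by norm_num) (by omega)
    have hmono2 : (2:ℕ)^(m+q) ≤ 2^(m+q+1) := Nat.pow_le_pow_right (by norm_num) (by omega)
    have hsplit := Finset.sum_Ico_consecutive (fun k : ℕ => 1/((k:ℝ)+1)) hmono1 hmono2
    have hblock := block_sum (m+q)
    push_cast
    rw [show m + (q+1) = (m+q)+1 by ring]
    rw [← hsplit]
    push_cast at ih
    linarith
lemma meas_ring (u v : ℝ) : MeasurableSet {x : Euc 2 | u ≤ ‖x‖ ∧ ‖x‖ ≤ v} :=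
  ((isClosed_le continuous_const continuous_norm).inter
    (isClosed_le continuous_norm continuous_const)).measurableSet

lemma meas_X {b : ℕ → ℝ} : MeasurableSet (RingSet b) :=
  MeasurableSet.biUnion (Set.to_countable _) (fun _ _ => meas_ring _ _)

section notA
variable {b : ℕ → ℝ} {δ : ℝ}
  (hb1 : ∀ k : ℕ, 1 ≤ k → (1 : ℝ) / (k + 1) < b k ∧ b k < 1 / k)
  (hb2 : ∀ k : ℕ, 1 ≤ k → 0 < 1 / (k : ℝ) - b k ∧ 1 / (k : ℝ) - b k ≤ δ / ((k : ℝ) + 1) ^ 4)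

include hb1 in
lemma volX_lt_top : volume (RingSet b) < ⊤ :=
  (measure_mono (X_subset_ball hb1)).trans_lt measure_closedBall_lt_top

include hb1 in
lemma volX_pos : 0 < volume (RingSet b) := by
  have hb1h := b1_lb hb1
  have hsub : {x : Euc 2 | 1/2 ≤ ‖x‖ ∧ ‖x‖ ≤ b 1} ⊆ RingSet b := by
    intro x hx
    refine mem_RingSet.2 ⟨1, le_rfl, ?_, hx.2⟩
    have : (1:ℝ)/(((1:ℕ):ℝ)+1) = 1/2 := by norm_num
    rw [this]
    exact hx.1
  refine lt_of_lt_of_le ?_ (measure_mono hsub)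
  rw [vol_ann (1/2) (b 1) (by norm_num) (by linarith)]
  apply ENNReal.ofReal_pos.2
  nlinarith [Real.pi_pos, hb1h, mul_pos (show (0:ℝ) < b 1 + 1/2 by linarith)
    (show (0:ℝ) < b 1 - 1/2 by linarith)]

include hb2 in
omit hb1 in
lemma width_lb {k : ℕ} (hk : 1 ≤ k) (hδ1 : 0 < δ) :
    (1-δ)/((k:ℝ)*((k:ℝ)+1)) ≤ b k - 1/((k:ℝ)+1) := by
  have hkr : (1:ℝ) ≤ (k:ℝ) := by exact_mod_cast hk
  have hgap := (hb2 k hk).2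
  have h1 : (1:ℝ)/(k:ℝ) - 1/((k:ℝ)+1) = 1/((k:ℝ)*((k:ℝ)+1)) := by
    field_simp
    ring
  have h2 : δ/(((k:ℝ))+1)^4 ≤ δ/((k:ℝ)*((k:ℝ)+1)) := by
    apply div_le_div_of_nonneg_left hδ1.le (by positivity)
    nlinarith [hkr, sq_nonneg ((k:ℝ)), sq_nonneg ((k:ℝ)+1)]
  have h3 : (1-δ)/((k:ℝ)*((k:ℝ)+1))
      = 1/((k:ℝ)*((k:ℝ)+1)) - δ/((k:ℝ)*((k:ℝ)+1)) := by ring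
  linarith

include hb1 hb2 in
set_option maxHeartbeats 1600000 in
lemma notA_proof (hδ1 : 0 < δ) (hδ2 : δ ≤ 1/100000) :
    ¬ CondA (RingSet b) ((volume (RingSet b))⁻¹ • volume.restrict (RingSet b)) := by
  rintro ⟨M, hM⟩
  set X := RingSet b with hX
  set c0 := ((volume X)⁻¹).toReal with hc0
  have hvt : volume X < ⊤ := volX_lt_top hb1
  have hvp : 0 < volume X := volX_pos hb1
  have hc0pos : 0 < c0 := by
    apply ENNReal.toReal_pos
    · exact ENNReal.inv_ne_zero.2 hvt.ne
    · exact ENNReal.inv_ne_top.2 hvp.ne'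
  set C := π * Real.exp (-4) * c0 with hC
  have hCpos : 0 < C := by
    have := Real.exp_pos (-4)
    have := Real.pi_pos
    positivity
  obtain ⟨n, hn⟩ := exists_nat_gt (M / C)
  set m := n + 1 with hm
  have hMC : M < C * m := by
    rw [div_lt_iff₀ hCpos] at hn
    have hnm : (n:ℝ) ≤ (m:ℝ) := by
      rw [hm]; push_cast; linarith
    nlinarith
  -- parameters
  set a : ℕ → ℝ := fun k => 1/((k:ℝ)+1) with ha
  have hak : ∀ j : ℕ, a j = 1/((j:ℝ)+1) := fun j => rfl
  set t := δ / (((2^m : ℕ):ℝ) + 2)^4 with ht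
  have h2m : (0:ℝ) < ((2^m : ℕ):ℝ) := by positivity
  have htpos : 0 < t := by positivity
  set L := 1 / t^2 with hL
  have hLpos : 0 < L := by positivity
  set f : Euc 2 → ℝ := fun x => Real.exp (-L * Metric.infDist x Xᶜ ^ 2) with hf
  -- basic properties of the set S of indices
  set S := Finset.Ico (2^m : ℕ) (2^(2*m) : ℕ) with hS
  have hSk : ∀ k ∈ S, 1 ≤ k ∧ 2^m ≤ k ∧ k + 1 ≤ 2^(2*m) := by
    intro k hk
    rw [hS, Finset.mem_Ico] at hk
    have h1 : 1 ≤ 2^m := Nat.one_le_two_pow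
    exact ⟨by omega, hk.1, by omega⟩
  -- t is at most the width of ring k, for k ∈ S
  have htw : ∀ k ∈ S, t ≤ b k - a k := by
    intro k hk
    obtain ⟨hk1, hk2, hk3⟩ := hSk k hk
    refine le_trans ?_ (width_lb hb2 hk1 hδ1)
    rw [ht]
    have hkk : (k:ℝ)*((k:ℝ)+1) ≤ (((2^m : ℕ):ℝ) + 2)^4 := by
      have e1 : (k:ℝ) ≤ ((2^(2*m) : ℕ):ℝ) := by
        have : (k:ℕ) ≤ 2^(2*m) := by omega
        exact_mod_cast this
      have e2 : (k:ℝ)+1 ≤ ((2^(2*m) : ℕ):ℝ) := by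
        have : (k:ℕ)+1 ≤ 2^(2*m) := hk3
        exact_mod_cast this
      have e3 : ((2^(2*m) : ℕ):ℝ) = ((2^m : ℕ):ℝ)^2 := by
        push_cast
        rw [two_mul, pow_add]
        ring
      have e4 : ((2^m : ℕ):ℝ)^2 ≤ (((2^m : ℕ):ℝ)+2)^2 := by nlinarith
      have e5 : (((2^m : ℕ):ℝ)+2)^4 = ((((2^m : ℕ):ℝ)+2)^2)^2 := by ring
      have hk0 : (0:ℝ) ≤ (k:ℝ) := Nat.cast_nonneg k
      rw [e5]
      calc (k:ℝ)*((k:ℝ)+1) ≤ (((2^m : ℕ):ℝ)^2) * (((2^m : ℕ):ℝ)^2) := by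
            rw [← e3]; apply mul_le_mul e1 e2 (by linarith) (by positivity)
        _ ≤ ((((2^m : ℕ):ℝ)+2)^2)^2 := by nlinarith
    apply div_le_div₀ (by linarith) (by linarith) (by positivity) hkk
  -- gap above ring k+1 is at most t for k ∈ S
  have hgk : ∀ k ∈ S, δ/((k:ℝ)+2)^4 ≤ t := by
    intro k hk
    obtain ⟨hk1, hk2, hk3⟩ := hSk k hk
    rw [ht]
    apply div_le_div_of_nonneg_left hδ1.le (by positivity)
    have : ((2^m : ℕ):ℝ) ≤ (k:ℝ) := by exact_mod_cast hk2
    have h24 : ((2^m : ℕ):ℝ) + 2 ≤ (k:ℝ)+2 := by linarith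
    apply pow_le_pow_left₀ (by positivity) h24
  -- each strip A k is inside ring k
  set A : ℕ → Set (Euc 2) := fun k => {x : Euc 2 | a k ≤ ‖x‖ ∧ ‖x‖ ≤ a k + t} with hA
  have hsubA : ∀ k ∈ S, A k ⊆ X := by
    intro k hk x hx
    exact mem_RingSet.2 ⟨k, (hSk k hk).1, hx.1, by linarith [hx.2, htw k hk]⟩
  have hapos : ∀ k : ℕ, 0 < a k := fun k => by rw [hak]; positivity
  -- volume of strips
  have hvolA : ∀ k : ℕ, ENNReal.ofReal (2*π*(a k)*t) ≤ volume (A k) := by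
    intro k
    show ENNReal.ofReal (2*π*(a k)*t) ≤ volume {x : Euc 2 | a k ≤ ‖x‖ ∧ ‖x‖ ≤ a k + t}
    rw [vol_ann (a k) (a k + t) (hapos k).le (by linarith)]
    apply ENNReal.ofReal_le_ofReal
    nlinarith [sq_nonneg t, Real.pi_pos, (hapos k).le, htpos.le]
  -- lower bound for f on A k
  have hlbf : ∀ k ∈ S, ∀ x ∈ A k, Real.exp (-4) ≤ f x := by
    intro k hk x hx
    obtain ⟨hk1, hk2, hk3⟩ := hSk k hk
    obtain ⟨hx1, hx2⟩ := hx
    have hx0 : x ≠ 0 := by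
      intro h
      rw [h, norm_zero] at hx1
      exact absurd hx1 (not_le.2 (hapos k))
    set c := (a k + b (k+1))/2 with hcdef
    have hbk1u : b (k+1) < a k := by
      have h5 := (hb1 (k+1) (by omega)).2
      push_cast at h5
      rw [hak]
      exact h5
    have hbk1l : 0 < b (k+1) := bk_pos hb1 (by omega)
    have hc1 : b (k+1) < c := by rw [hcdef]; linarith
    have hc2 : c < a k := by rw [hcdef]; linarith
    have hcpos : 0 < c := by rw [hcdef]; linarith
    obtain ⟨hzn, hzd⟩ := radial_pt x hx0 c hcpos.le
    have hznotX : ((c / ‖x‖) • x) ∉ X := by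
      apply gap_not_mem hb1 hk1 hc1 _ hzn
      rw [hak] at hc2; exact hc2
    have hdle : Metric.infDist x Xᶜ ≤ 2*t := by
      refine le_trans (Metric.infDist_le_dist_of_mem hznotX) ?_
      rw [hzd, abs_of_nonneg (by linarith : (0:ℝ) ≤ ‖x‖ - c)]
      have hgap2 : a k - b (k+1) ≤ t := by
        have h2 := (hb2 (k+1) (by omega)).2
        push_cast at h2
        have : δ/((k:ℝ)+1+1)^4 ≤ t := by
          have := hgk k hk
          rw [show ((k:ℝ)+1+1) = (k:ℝ)+2 by ring]
          exact this
        rw [hak]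
        have hh : (1:ℝ)/((k:ℝ)+1) - b (k+1) ≤ δ/((k:ℝ)+1+1)^4 := h2
        linarith
      have : a k - c ≤ t/2 := by rw [hcdef]; linarith
      linarith
    have hd0 : 0 ≤ Metric.infDist x Xᶜ := Metric.infDist_nonneg
    rw [hf]
    apply Real.exp_le_exp.2
    have hsq : Metric.infDist x Xᶜ ^ 2 ≤ (2*t)^2 := by
      apply pow_le_pow_left₀ hd0 hdle
    have hL4 : L * (2*t)^2 = 4 := by
      rw [hL]; field_simp; ring
    nlinarith [hLpos.le]
  -- continuity and integrability
  have hfc : Continuous f := by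
    apply Real.continuous_exp.comp
    exact continuous_const.mul ((Metric.continuous_infDist_pt _).pow 2)
  have hIntX : IntegrableOn f X volume := by
    apply Measure.integrableOn_of_bounded (M := 1) hvt.ne hfc.aestronglyMeasurable
    apply ae_of_all
    intro x
    rw [Real.norm_eq_abs, abs_of_pos (Real.exp_pos _), Real.exp_le_one_iff]
    apply mul_nonpos_of_nonpos_of_nonneg (by linarith) (by positivity)
  have hIntA : ∀ k ∈ S, IntegrableOn f (A k) volume :=
    fun k hk => hIntX.mono_set (hsubA k hk)
  -- disjointness
  have hdisj : (S : Set ℕ).Pairwise (Function.onFun Disjoint A) := by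
    have key : ∀ i ∈ S, ∀ j ∈ S, i < j → ∀ x, x ∈ A i → x ∈ A j → False := by
      intro i hi j hj hij x hxi hxj
      have hji : (i:ℝ)+1 ≤ (j:ℝ) := by exact_mod_cast hij
      have h1 : a j + t ≤ b j := by linarith [htw j hj]
      have h2 : b j < 1/(j:ℝ) := (hb1 j (hSk j hj).1).2
      have h3 : (1:ℝ)/(j:ℝ) ≤ a i := by
        rw [hak]
        apply one_div_le_one_div_of_le (by positivity) hji
      exact absurd (hxi.1.trans hxj.2) (not_le.2 (by linarith))
    intro i hi j hj hij
    rcases lt_or_gt_of_ne hij with h | h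
    · exact Set.disjoint_left.2 fun x hxi hxj => key i hi j hj h x hxi hxj
    · exact Set.disjoint_right.2 fun x hxj hxi => key j hj i hi h x hxj hxi
  -- the union
  set U := ⋃ k ∈ S, A k with hU
  have hUX : U ⊆ X := Set.iUnion₂_subset fun k hk => hsubA k hk
  have hIntU : IntegrableOn f U volume := hIntX.mono_set hUX
  have hUeq : ∫ x in U, f x = ∑ k ∈ S, ∫ x in A k, f x := by
    rw [hU]
    exact integral_biUnion_finset S (fun k _ => meas_ring _ _) hdisj hIntA
  have hXU : ∫ x in U, f x ≤ ∫ x in X, f x := by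
    apply setIntegral_mono_set hIntX
    · exact ae_of_all _ (fun x => (Real.exp_pos _).le)
    · exact HasSubset.Subset.eventuallyLE hUX
  -- lower bound for each strip integral
  have hstrip : ∀ k ∈ S, Real.exp (-4) * (2*π*(a k)*t) ≤ ∫ x in A k, f x := by
    intro k hk
    have hvfin : volume (A k) ≠ ⊤ :=
      ((measure_mono (hsubA k hk)).trans_lt hvt).ne
    have h1 : Real.exp (-4) * (volume (A k)).toReal ≤ ∫ x in A k, f x :=
      by have h := setIntegral_ge_of_const_le_real (meas_ring _ _) hvfin (hlbf k hk) (hIntA k hk); exact h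
    have h2 : 2*π*(a k)*t ≤ (volume (A k)).toReal := by
      have := ENNReal.toReal_mono hvfin (hvolA k)
      rwa [ENNReal.toReal_ofReal (by positivity)] at this
    nlinarith [Real.exp_pos (-4)]
  -- sum lower bound
  have hsumlb : Real.exp (-4) * π * t * m ≤ ∑ k ∈ S, ∫ x in A k, f x := by
    have h1 : ∀ k ∈ S, Real.exp (-4) * (2*π*t) * (a k) ≤ ∫ x in A k, f x := by
      intro k hk
      have := hstrip k hk
      calc Real.exp (-4) * (2*π*t) * (a k) = Real.exp (-4) * (2*π*(a k)*t) := by ring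
        _ ≤ _ := this
    have h2 : ∑ k ∈ S, Real.exp (-4) * (2*π*t) * (a k) ≤ ∑ k ∈ S, ∫ x in A k, f x :=
      Finset.sum_le_sum h1
    have h3 : ∑ k ∈ S, Real.exp (-4) * (2*π*t) * (a k)
        = Real.exp (-4) * (2*π*t) * ∑ k ∈ S, (a k) := by
      rw [Finset.mul_sum]
    have h4 : (m:ℝ)/2 ≤ ∑ k ∈ S, (a k) := by
      have := harm_sum m m
      rw [hS, show 2*m = m+m by ring]
      exact this
    have h5 : Real.exp (-4) * (2*π*t) * ((m:ℝ)/2) ≤ Real.exp (-4) * (2*π*t) * ∑ k ∈ S, (a k) := by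
      apply mul_le_mul_of_nonneg_left h4
      positivity
    calc Real.exp (-4) * π * t * m = Real.exp (-4) * (2*π*t) * ((m:ℝ)/2) := by ring
      _ ≤ Real.exp (-4) * (2*π*t) * ∑ k ∈ S, (a k) := h5
      _ = ∑ k ∈ S, Real.exp (-4) * (2*π*t) * (a k) := h3.symm
      _ ≤ ∑ k ∈ S, ∫ x in A k, f x := h2
  -- the measure Q integral
  have hQint : ∫ x, f x ∂((volume X)⁻¹ • volume.restrict X) = c0 * ∫ x in X, f x := by
    rw [integral_smul_measure, hc0, smul_eq_mul]
  -- power identity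
  have hpow : L ^ ((1:ℝ)/((2:ℕ):ℝ)) = 1/t := by
    have hLt : L = (1/t)^(2:ℕ) := by
      rw [hL]
      field_simp
    rw [hLt, ← Real.rpow_natCast (1/t) 2, ← Real.rpow_mul (by positivity)]
    norm_num
  -- final chain
  have hIX : Real.exp (-4) * π * t * m ≤ ∫ x in X, f x := by
    calc Real.exp (-4) * π * t * m ≤ ∑ k ∈ S, ∫ x in A k, f x := hsumlb
      _ = ∫ x in U, f x := hUeq.symm
      _ ≤ ∫ x in X, f x := hXU
  have hfinal : C * m ≤ L ^ ((1:ℝ)/((2:ℕ):ℝ)) *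
      ∫ x, f x ∂((volume X)⁻¹ • volume.restrict X) := by
    rw [hpow, hQint]
    have h2 : c0 * (Real.exp (-4)*π*t*m) ≤ c0 * ∫ x in X, f x :=
      mul_le_mul_of_nonneg_left hIX hc0pos.le
    calc C * m = (1/t) * (c0 * (Real.exp (-4)*π*t*m)) := by
          rw [hC]; field_simp
      _ ≤ (1/t) * (c0 * ∫ x in X, f x) :=
          mul_le_mul_of_nonneg_left h2 (by positivity)
  have hcontr : C * m ≤ M := hfinal.trans (hM L hLpos)
  exact absurd hcontr (not_le.2 hMC)
end notA

/-- Proposition 2, Example 2: with a_k = 1/(k+1) and rings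
C_k = {x ∈ ℝ² : a_k ≤ ‖x‖ ≤ b_k}, there exists δ > 0 such that whenever
b_k ∈ (a_k, a_{k−1}) and 0 < a_{k−1} − b_k ≤ δ/(k+1)⁴ for all k ≥ 1, the union
𝒳 = ∪_{k≥1} C_k satisfies (X2) but not (A) (for Q uniform on 𝒳). -/
theorem statement9 :
    ∃ δ : ℝ, 0 < δ ∧
      ∀ b : ℕ → ℝ,
        (∀ k : ℕ, 1 ≤ k → (1 : ℝ) / (k + 1) < b k ∧ b k < 1 / k) →
        (∀ k : ℕ, 1 ≤ k → 0 < 1 / (k : ℝ) - b k ∧ 1 / (k : ℝ) - b k ≤ δ / ((k : ℝ) + 1) ^ 4) →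
        let 𝒳 : Set (Euc 2) := ⋃ k ∈ {k : ℕ | 1 ≤ k},
            {x : Euc 2 | 1 / ((k : ℝ) + 1) ≤ ‖x‖ ∧ ‖x‖ ≤ b k}
        let Q : Measure (Euc 2) := (volume 𝒳)⁻¹ • volume.restrict 𝒳
        (∃ c : ℝ, 0 < c ∧ CondX2 𝒳 c) ∧ ¬ CondA 𝒳 Q := by
  refine ⟨1/100000, by norm_num, ?_⟩
  intro b hb1 hb2 𝒳 Q
  constructor
  · exact ⟨1/16, by norm_num, condX2_proof hb1 hb2 (by norm_num) le_rfl⟩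
  · exact notA_proof hb1 hb2 (by norm_num) le_rfl
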